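/- Let λ ⊢ n have Frobenius coordinates (a₁,...,a_m | b₁,...,b_m), let k ≥ 1, set r = n − a₁ − 1/2, and assume k + r + 1 < n/2. Then the quantity MT = ((a₁ − 1/2)^{k↓}/n^{k↓}) · ∏_{j=2}^m (a₁ − a_j − k)/(a₁ − a_j) · ∏_{j=1}^m (a₁ + b_j)/(a₁ + b_j − k) satisfies MT ≤ exp(−k·r/n). -/

import Mathlib

/-- The `i`-th part of a partition (0-indexed, parts in decreasing order, `0` beyond the
number of parts). -/
def partNth (n : ℕ) (l : Nat.Partition n) (i : ℕ) : ℕ :=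
  ((l.parts.sort (· ≤ ·)).reverse.getD i 0)

/-- Diagonal length `m` of the partition: the number of `i` (0-indexed) with `λ_{i+1} ≥ i+1`. -/
def diagLen (n : ℕ) (l : Nat.Partition n) : ℕ :=
  ((Finset.range n).filter (fun i => i < partNth n l i)).card

/-- Number of parts of the conjugate partition `λ'` at 0-indexed position `i`, i.e.
`λ'_{i+1} = #{j : λ_j ≥ i+1}`. -/
def conjNth (n : ℕ) (l : Nat.Partition n) (i : ℕ) : ℕ :=
  ((Finset.range n).filter (fun j => i < partNth n l j)).card

/-- Frobenius coordinate `a_i = λ_i − i + 1/2` (1-indexed; here `i : ℕ` is 0-indexed). -/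
noncomputable def fA (n : ℕ) (l : Nat.Partition n) (i : ℕ) : ℝ :=
  (partNth n l i : ℝ) - i - 1/2

/-- Frobenius coordinate `b_i = λ′_i − i + 1/2` (1-indexed; here `i : ℕ` is 0-indexed). -/
noncomputable def fB (n : ℕ) (l : Nat.Partition n) (i : ℕ) : ℝ :=
  (conjNth n l i : ℝ) - i - 1/2

/-- The falling factorial `x^{k↓} = x(x−1)⋯(x−k+1)`. -/
noncomputable def fall (x : ℝ) (k : ℕ) : ℝ := ∏ i ∈ Finset.range k, (x - i)

/-- The main term in the asymptotic evaluation of the character ratio at a `k`-cycle: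
`MT = ((a₁ − 1/2)^{k↓}/n^{k↓}) · ∏_{j=2}^m (a₁−a_j−k)/(a₁−a_j) · ∏_{j=1}^m (a₁+b_j)/(a₁+b_j−k)`. -/
noncomputable def mainTerm (n k : ℕ) (l : Nat.Partition n) : ℝ :=
  (fall (fA n l 0 - 1/2) k / fall (n : ℝ) k) *
    (∏ j ∈ Finset.Ico 1 (diagLen n l), (fA n l 0 - fA n l j - k) / (fA n l 0 - fA n l j)) *
    (∏ j ∈ Finset.range (diagLen n l), (fA n l 0 + fB n l j) / (fA n l 0 + fB n l j - k))

/-!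
Put `x = λ₁ = a₁ + 1/2`, so that `r = n - x`. For `j ≥ 2` the `j`-th factors of the two products
pair up into `(X - k)/X · Y/(Y - k)` with `X = a₁ - a_j` and `Y = a₁ + b_j`. Here `Y - X = a_j + b_j`
is a hook length, so `X ≤ Y`, and `X ≥ k` because `λ_j ≤ r` while `λ₁ > k + r`; hence each pair
lies in `[0, 1]`. The unpaired factor `(a₁ + b₁)/(a₁ + b₁ - k)` is at most `x/(x - k)` since
`a₁ + b₁ ≥ x`, and `(x - 1)^{k↓} · x/(x - k) = x^{k↓}`. Finally
`x^{k↓}/n^{k↓} ≤ (x/n)^k = (1 - r/n)^k ≤ exp(-k r/n)`.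
-/

theorem List.sum_range_getD_le (L : List ℕ) (N : ℕ) :
    ∑ i ∈ Finset.range N, L.getD i 0 ≤ L.sum := by
  induction L generalizing N with
  | nil => simp
  | cons a t ih =>
    cases N with
    | zero => simp
    | succ N =>
      rw [Finset.sum_range_succ']
      simpa [add_comm] using ih N

section Partition

variable {n : ℕ} (l : Nat.Partition n)

theorem partNth_antitone : Antitone (partNth n l) := by
  intro i j hij
  have hsorted : (l.parts.sort (· ≤ ·)).reverse.Pairwise (· ≥ ·) := by
    rw [List.pairwise_reverse]
    exact Multiset.pairwise_sort l.parts (· ≤ ·)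
  unfold partNth
  rcases lt_or_ge j (l.parts.sort (· ≤ ·)).reverse.length with hj | hj
  · rw [List.getD_eq_getElem _ _ hj, List.getD_eq_getElem _ _ (hij.trans_lt hj)]
    rcases hij.eq_or_lt with rfl | hlt
    · rfl
    · exact hsorted.rel_get_of_lt hlt
  · rw [List.getD_eq_default _ _ hj]
    exact Nat.zero_le _

theorem sum_partNth_le (s : Finset ℕ) : ∑ i ∈ s, partNth n l i ≤ n := by
  calc ∑ i ∈ s, partNth n l i
      ≤ ∑ i ∈ Finset.range (s.sup id).succ, partNth n l i :=
        Finset.sum_le_sum_of_subset (Finset.subset_range_sup_succ s)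
    _ ≤ (l.parts.sort (· ≤ ·)).reverse.sum := List.sum_range_getD_le _ _
    _ = n := by rw [List.sum_reverse, ← Multiset.sum_coe, Multiset.sort_eq, l.parts_sum]

theorem partNth_zero_pos (hn : 0 < n) : 0 < partNth n l 0 := by
  have hne : (l.parts.sort (· ≤ ·)).reverse ≠ [] := by
    rw [Ne, List.reverse_eq_nil_iff, ← List.length_eq_zero_iff, Multiset.length_sort,
      Multiset.card_eq_zero]
    intro h0
    have := l.parts_sum
    rw [h0, Multiset.sum_zero] at this
    omega
  obtain ⟨a, t, hat⟩ := List.exists_cons_of_ne_nil hne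
  have ha : a ∈ l.parts := by
    rw [← Multiset.mem_sort (· ≤ ·), ← List.mem_reverse, hat]
    exact List.mem_cons_self
  simpa [partNth, hat] using l.parts_pos ha

theorem diagLen_pos (hn : 0 < n) : 0 < diagLen n l :=
  Finset.card_pos.2 ⟨0, Finset.mem_filter.2 ⟨Finset.mem_range.2 hn, partNth_zero_pos l hn⟩⟩

theorem lt_partNth_of_lt_diagLen {j : ℕ} (hj : j < diagLen n l) : j < partNth n l j := by
  by_contra! hle
  have hsub : (Finset.range n).filter (fun i => i < partNth n l i) ⊆ Finset.range j := by
    intro i hi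
    simp only [Finset.mem_filter, Finset.mem_range] at hi ⊢
    by_contra! hji
    have := partNth_antitone l hji
    omega
  have hcard := Finset.card_le_card hsub
  rw [Finset.card_range] at hcard
  exact absurd hcard hj.not_ge

theorem lt_conjNth_of_lt_diagLen {j : ℕ} (hj : j < diagLen n l) : j < conjNth n l j := by
  have hjn : j < n := hj.trans_le (Finset.card_filter_le _ _ |>.trans_eq (Finset.card_range n))
  have hsub : Finset.range (j + 1) ⊆ (Finset.range n).filter (fun i => j < partNth n l i) := by
    intro i hi
    rw [Finset.mem_range] at hi
    rw [Finset.mem_filter, Finset.mem_range]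
    exact ⟨by omega, (lt_partNth_of_lt_diagLen l hj).trans_le (partNth_antitone l (by omega))⟩
  simpa [conjNth] using Finset.card_le_card hsub

end Partition

theorem sub_div_mul_div_sub_le_one {k X Y : ℝ} (hk : 0 ≤ k) (hX : 0 < X) (hXY : X ≤ Y)
    (hkY : k < Y) : (X - k) / X * (Y / (Y - k)) ≤ 1 := by
  rw [div_mul_div_comm, div_le_one (mul_pos hX (sub_pos.2 hkY))]
  nlinarith

theorem div_sub_le_div_sub {k x y : ℝ} (hk : 0 ≤ k) (hkx : k < x) (hxy : x ≤ y) :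
    y / (y - k) ≤ x / (x - k) := by
  rw [div_le_div_iff₀ (by linarith) (by linarith)]
  nlinarith

section FallingFactorial

theorem fall_pos {x : ℝ} {k : ℕ} (hkx : (k : ℝ) ≤ x) : 0 < fall x k :=
  Finset.prod_pos fun i hi => by
    have : (i : ℝ) < k := by exact_mod_cast Finset.mem_range.1 hi
    linarith

theorem fall_sub_one_mul (x : ℝ) (k : ℕ) : fall (x - 1) k * x = fall x k * (x - k) := by
  unfold fall
  rw [← Finset.prod_range_succ, Finset.prod_range_succ']
  simp only [Nat.cast_add, Nat.cast_one, Nat.cast_zero, sub_zero, sub_add_eq_sub_sub,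
    sub_right_comm]

theorem fall_le_div_pow_mul_fall {x y : ℝ} {k : ℕ} (hkx : (k : ℝ) ≤ x + 1) (hxy : x ≤ y)
    (hy : 0 < y) : fall x k ≤ (x / y) ^ k * fall y k := by
  unfold fall
  calc ∏ i ∈ Finset.range k, (x - i) ≤ ∏ i ∈ Finset.range k, x / y * (y - i) := by
        refine Finset.prod_le_prod (fun i hi => ?_) (fun i _ => ?_)
        · have : (i : ℝ) + 1 ≤ k := by exact_mod_cast Finset.mem_range.1 hi
          linarith
        · rw [div_mul_eq_mul_div, le_div_iff₀ hy]
          nlinarith [(Nat.cast_nonneg i : (0 : ℝ) ≤ i)]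
    _ = _ := by rw [Finset.prod_mul_distrib, Finset.prod_const, Finset.card_range]

theorem fall_div_fall_le_exp {x y : ℝ} {k : ℕ} (hkx : (k : ℝ) ≤ x) (hxy : x ≤ y)
    (hy : 0 < y) :
    fall x k / fall y k ≤ Real.exp (-k * (y - x) / y) := by
  calc fall x k / fall y k ≤ (x / y) ^ k := by
        rw [div_le_iff₀ (fall_pos (hkx.trans hxy))]
        exact fall_le_div_pow_mul_fall (by linarith) hxy hy
    _ ≤ Real.exp (-(y - x) / y) ^ k := by
        gcongr
        · exact div_nonneg ((Nat.cast_nonneg k).trans hkx) hy.le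
        · have := Real.add_one_le_exp (-(y - x) / y)
          rwa [show -(y - x) / y + 1 = x / y by field_simp; ring] at this
    _ = Real.exp (-k * (y - x) / y) := by rw [← Real.exp_nat_mul]; ring_nf

theorem fall_sub_one_div_fall_mul_le_exp {x y N : ℝ} {k : ℕ} (hkx : (k : ℝ) + 1 ≤ x)
    (hxy : x ≤ y) (hxN : x ≤ N) :
    fall (x - 1) k / fall N k * (y / (y - k)) ≤ Real.exp (-k * (N - x) / N) := by
  have hk : (0 : ℝ) ≤ k := Nat.cast_nonneg k
  calc _ ≤ fall (x - 1) k / fall N k * (x / (x - k)) :=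
        mul_le_mul_of_nonneg_left (div_sub_le_div_sub hk (by linarith) hxy)
          (div_nonneg (fall_pos (by linarith)).le (fall_pos (by linarith)).le)
    _ = fall x k / fall N k := by
        rw [div_mul_div_comm, fall_sub_one_mul, mul_div_mul_right _ _ (by linarith)]
    _ ≤ _ := fall_div_fall_le_exp (by linarith) hxN (by linarith)

end FallingFactorial

noncomputable def pairFactor (n k : ℕ) (l : Nat.Partition n) (j : ℕ) : ℝ :=
  (fA n l 0 - fA n l j - k) / (fA n l 0 - fA n l j) *
    ((fA n l 0 + fB n l j) / (fA n l 0 + fB n l j - k))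

section MainTerm

variable {n k : ℕ} (l : Nat.Partition n)

theorem mainTerm_eq_mul_prod_pairFactor (hm : 0 < diagLen n l) :
    mainTerm n k l = fall (fA n l 0 - 1/2) k / fall n k *
      ((fA n l 0 + fB n l 0) / (fA n l 0 + fB n l 0 - k)) *
      ∏ j ∈ Finset.Ico 1 (diagLen n l), pairFactor n k l j := by
  rw [mainTerm, Finset.range_eq_Ico, ← Finset.prod_Ico_consecutive _ (Nat.zero_le 1) hm]
  simp only [pairFactor, Finset.prod_mul_distrib, Nat.Ico_zero_eq_range, Finset.range_one,
    Finset.prod_singleton]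
  ring

theorem pairFactor_mem_Icc (hk : k + n < 2 * partNth n l 0) {j : ℕ}
    (hj : j ∈ Finset.Ico 1 (diagLen n l)) : pairFactor n k l j ∈ Set.Icc 0 1 := by
  obtain ⟨hj1, hjm⟩ := Finset.mem_Ico.1 hj
  have hsum : partNth n l 0 + partNth n l j ≤ n := by
    simpa [Finset.sum_pair (show 0 ≠ j by omega)] using sum_partNth_le l {0, j}
  have hanti := partNth_antitone l (Nat.zero_le j)
  have hpart := lt_partNth_of_lt_diagLen l hjm
  have hconj := lt_conjNth_of_lt_diagLen l hjm
  have hkX : (k : ℝ) + partNth n l j ≤ partNth n l 0 + j := by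
    exact_mod_cast (show k + partNth n l j ≤ partNth n l 0 + j by omega)
  have hX : (partNth n l j : ℝ) < partNth n l 0 + j := by
    exact_mod_cast (show partNth n l j < partNth n l 0 + j by omega)
  have hXY : (2 * j + 1 : ℝ) ≤ partNth n l j + conjNth n l j := by
    exact_mod_cast (show 2 * j + 1 ≤ partNth n l j + conjNth n l j by omega)
  have hkY : (k : ℝ) + j + 1 < partNth n l 0 + conjNth n l j := by
    exact_mod_cast (show k + j + 1 < partNth n l 0 + conjNth n l j by omega)
  simp only [pairFactor, fA, fB, Nat.cast_zero, sub_zero]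
  constructor
  · apply mul_nonneg <;> apply div_nonneg <;> linarith
  · apply sub_div_mul_div_sub_le_one (Nat.cast_nonneg k) <;> linarith

theorem prod_pairFactor_le_one (hk : k + n < 2 * partNth n l 0) :
    ∏ j ∈ Finset.Ico 1 (diagLen n l), pairFactor n k l j ≤ 1 :=
  Finset.prod_le_one (fun _ hj => (pairFactor_mem_Icc l hk hj).1)
    fun _ hj => (pairFactor_mem_Icc l hk hj).2

end MainTerm

theorem mainTerm_le_exp_general (n k : ℕ) (l : Nat.Partition n)
    (h : (k : ℝ) + ((n : ℝ) - fA n l 0 - 1/2) + 1 < (n : ℝ) / 2) :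
    mainTerm n k l ≤ Real.exp (-(k : ℝ) * ((n : ℝ) - fA n l 0 - 1/2) / n) := by
  have ha : fA n l 0 = partNth n l 0 - 1/2 := by simp [fA]
  set x := partNth n l 0
  have hxn : x ≤ n := by simpa using sum_partNth_le l {0}
  have hdom : k + n < 2 * x := by
    rw [ha] at h
    exact_mod_cast (show (k : ℝ) + n < 2 * x by linarith)
  have hm : 0 < diagLen n l := diagLen_pos l (by omega)
  have hkx : (k : ℝ) + 1 ≤ x := by exact_mod_cast (show k + 1 ≤ x by omega)
  have hy : (x : ℝ) ≤ x - 1/2 + fB n l 0 := by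
    have : (1 : ℝ) ≤ conjNth n l 0 := by exact_mod_cast lt_conjNth_of_lt_diagLen l hm
    simp only [fB, Nat.cast_zero]
    linarith
  rw [mainTerm_eq_mul_prod_pairFactor l hm, ha, sub_sub, add_halves]
  calc _ ≤ fall (x - 1) k / fall n k * ((x - 1/2 + fB n l 0) / (x - 1/2 + fB n l 0 - k)) := by
        refine mul_le_of_le_one_right (mul_nonneg (div_nonneg ?_ ?_) ?_)
          (prod_pairFactor_le_one l hdom)
        · exact (fall_pos (by linarith)).le
        · exact (fall_pos (by exact_mod_cast (show k ≤ n by omega))).le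
        · exact div_nonneg (by linarith) (by linarith)
    _ ≤ _ := fall_sub_one_div_fall_mul_le_exp hkx hy (by exact_mod_cast hxn)
    _ = _ := by ring_nf

/-- **Lemma (main term bound).** Let `λ ⊢ n` have Frobenius coordinates `(a|b)`, `k ≥ 1`,
`r = n − a₁ − 1/2`, and assume `k + r + 1 < n/2`. Then `MT ≤ exp(−k·r/n)`. -/
theorem mainTerm_le_exp (n k : ℕ) (hk : 1 ≤ k) (l : Nat.Partition n)
    (h : (k : ℝ) + ((n : ℝ) - fA n l 0 - 1/2) + 1 < (n : ℝ) / 2) :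
    mainTerm n k l ≤ Real.exp (-(k : ℝ) * ((n : ℝ) - fA n l 0 - 1/2) / n) :=
  mainTerm_le_exp_general n k l h
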